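/- In the FCFS-F mechanism, for every buyer i with true type θ_i = (v_i, r_i), reporting (v_i, ∅) (the true value while hiding all followers) is a dominant strategy: for every profile θ'_{-i} of reports of the other buyers and every report θ'_i = (v'_i, r'_i) with r'_i ⊆ r_i, the utility from reporting (v_i, ∅) is at least the utility from reporting θ'_i. -/

import Mathlib

open scoped Classical NNReal ENNReal

namespace SNA

/-- A reported type `θ'_i = (v'_i, r'_i)`: a (nonnegative) value for one unit together with
the set of followers to whom the buyer forwards the information. -/
abbrev Profile (N : Type*) := N → ℝ≥0 × Finset N

variable {N : Type*} [Fintype N] [DecidableEq N] [LinearOrder N]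

/-- `reachIn θ rs m i`: in the digraph induced by the reported profile `θ` and the
seller's direct-buyer set `rs` (the seller links to every member of `rs`, and each buyer
`j` links to every member of `(θ j).2`), there is a directed path from the seller to `i`
using exactly `m + 1` edges. -/
def reachIn (θ : Profile N) (rs : Finset N) : ℕ → N → Prop
  | 0, i => i ∈ rs
  | m + 1, i => ∃ j, reachIn θ rs m j ∧ i ∈ (θ j).2

/-- Buyer `i` is connected: reachable from the seller. -/
def Connected (θ : Profile N) (rs : Finset N) (i : N) : Prop :=
  ∃ m, reachIn θ rs m i

/-- `N̂`: the set of connected buyers. -/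
noncomputable def Nhat (θ : Profile N) (rs : Finset N) : Finset N :=
  Finset.univ.filter (Connected θ rs)

/-- `d(i)`: the length of a shortest directed path from the seller to `i`
(`⊤` if `i` is not connected). -/
noncomputable def dNet (θ : Profile N) (rs : Finset N) (i : N) : ℕ∞ :=
  sInf {n : ℕ∞ | ∃ m : ℕ, reachIn θ rs m i ∧ n = (m : ℕ∞) + 1}

/-- Reachability from the seller by a directed path that avoids buyer `j`. -/
def reachInAvoid (θ : Profile N) (rs : Finset N) (j : N) : ℕ → N → Prop
  | 0, i => i ∈ rs ∧ i ≠ j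
  | m + 1, i => ∃ a, reachInAvoid θ rs j m a ∧ i ∈ (θ a).2 ∧ i ≠ j

/-- `j` is a critical parent of `i`: both are connected, `j ≠ i`, and every directed path
from the seller to `i` passes through `j`. -/
def CriticalParent (θ : Profile N) (rs : Finset N) (j i : N) : Prop :=
  Connected θ rs i ∧ Connected θ rs j ∧ j ≠ i ∧ ¬ ∃ m, reachInAvoid θ rs j m i

/-- The descendants of `i` in the diffusion critical tree `T(θ)`, i.e. `i` together with
the connected buyers lying in the subtree of `T(θ)` rooted at `i`; the ancestors of a
buyer in the diffusion critical tree are exactly its critical parents. -/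
noncomputable def desc (θ : Profile N) (rs : Finset N) (i : N) : Finset N :=
  Finset.univ.filter fun j => Connected θ rs j ∧ (j = i ∨ CriticalParent θ rs i j)

/-- `N̂₋ᵢ`: the connected buyers with `i` and all of its descendants in the diffusion
critical tree removed. -/
noncomputable def NhatMinus (θ : Profile N) (rs : Finset N) (i : N) : Finset N :=
  Nhat θ rs \ desc θ rs i

/-- The `k'`-th highest element of a multiset of values (as an element of `ℝ≥0∞`):
`⊤` if `k' ≤ 0`, and `0` if the multiset has fewer than `k'` elements. -/
noncomputable def kthHighest (s : Multiset ℝ≥0) (k' : ℕ) : ℝ≥0∞ :=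
  if k' = 0 then ⊤
  else if s.card < k' then 0
  else ((s.sort (· ≤ ·)).getD (s.card - k') 0 : ℝ≥0)

/-- `v*(S, k')`: the `k'`-th highest reported value among the buyers in `S`. -/
noncomputable def vstar (θ : Profile N) (S : Finset N) (k' : ℕ) : ℝ≥0∞ :=
  kthHighest (S.val.map fun i => (θ i).1) k'

/-- The priority order on the connected buyers: ascending order of the distance `d(·)`,
with ties broken by the fixed linear order on `N` (mergeSort is stable). -/
noncomputable def prioList (θ : Profile N) (rs : Finset N) : List N :=
  ((Nhat θ rs).sort (· ≤ ·)).mergeSort fun i j => decide (dNet θ rs i ≤ dNet θ rs j)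

/-- One run of the distance-based mechanism over a list of buyers (in priority order),
given the current winner set `W` and the remaining number of units `k'`; `extra` is an
additional pool of (dummy) values included in every price computation.
Buyer `i` faces the price `p = v*((N̂₋ᵢ ∖ W) + extra, k')` and wins (paying `p`)
iff her reported value is at least `p`. -/
noncomputable def runAux (θ : Profile N) (rs : Finset N) (extra : Multiset ℝ≥0) :
    List N → Finset N → ℕ → (N → ℕ) × (N → ℝ≥0)
  | [], _, _ => (fun _ => 0, fun _ => 0)
  | i :: rest, W, k' =>
    let p : ℝ≥0∞ :=
      kthHighest (((NhatMinus θ rs i \ W).val.map fun j => (θ j).1) + extra) k'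
    if (((θ i).1 : ℝ≥0∞)) ≥ p then
      let out := runAux θ rs extra rest (insert i W) (k' - 1)
      (Function.update out.1 i 1, Function.update out.2 i p.toNNReal)
    else
      let out := runAux θ rs extra rest W k'
      (Function.update out.1 i 0, Function.update out.2 i 0)

/-- The distance-based mechanism: `.1` is the allocation rule `f` (each buyer is mapped
to `1` if she wins a unit and to `0` otherwise; unconnected buyers get `0`) and `.2` is
the payment rule `t` (unconnected buyers and losers pay `0`). -/
noncomputable def DBM (k : ℕ) (θ : Profile N) (rs : Finset N) : (N → ℕ) × (N → ℝ≥0) :=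
  runAux θ rs 0 (prioList θ rs) ∅ k

/-- The distance-based mechanism with reserve price `vh`: `k` dummy buyers of value `vh`,
attached directly to the seller only (hence lying in every `N̂₋ᵢ` and never being
descendants of a real buyer), are added to every price pool, but they are never processed
as bidders and never win a unit. -/
noncomputable def DBMres (k : ℕ) (vh : ℝ≥0) (θ : Profile N) (rs : Finset N) :
    (N → ℕ) × (N → ℝ≥0) :=
  runAux θ rs (Multiset.replicate k vh) (prioList θ rs) ∅ k

/-- The No-Diffusion-VCG mechanism: VCG applied to the direct buyers only. -/
noncomputable def NDVCG (k : ℕ) (θ : Profile N) (rs : Finset N) : (N → ℕ) × (N → ℝ≥0) :=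
  (fun i => if i ∈ rs ∧ (((θ i).1 : ℝ≥0∞)) ≥ vstar θ (rs.erase i) k then 1 else 0,
   fun i => if i ∈ rs ∧ (((θ i).1 : ℝ≥0∞)) ≥ vstar θ (rs.erase i) k
     then (vstar θ (rs.erase i) k).toNNReal else 0)

/-- The FCFS-F mechanism: the first `k` connected buyers in the priority order get a
unit for free. -/
noncomputable def FCFS (k : ℕ) (θ : Profile N) (rs : Finset N) : (N → ℕ) × (N → ℝ≥0) :=
  (fun i => if i ∈ (prioList θ rs).take k then 1 else 0, fun _ => 0)


/-!
Payments are zero, so it suffices that hiding all followers never pushes `i` out of the first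
`k` places of the priority list. Declaring more followers only adds edges out of `i`; distances
weakly decrease, but any path that became shorter runs through `i` first, so with `d₁`, `d₂` the
distances after hiding and after the other report, `min (d₁ j) (d₁ i) ≤ d₂ j ≤ d₁ j`. In particular `d(i)` is unchanged, and every buyer ahead of
`i` after hiding is still ahead of `i` after any other report.
-/

open scoped Finset

variable {α β : Type*}

theorem _root_.List.filter_mergeSort_eq_filter {le : α → α → Bool} (p : α → Bool)
    (trans : ∀ a b c, le a b → le b c → le a c) (total : ∀ a b, le a b || le b a)
    {l : List α} (h : (l.filter p).Pairwise (fun a b => le a b)) :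
    (l.mergeSort le).filter p = l.filter p := by
  have hsub : (l.filter p).Sublist ((l.mergeSort le).filter p) := by
    simpa [List.filter_filter] using
      (List.sublist_mergeSort trans total h List.filter_sublist).filter p
  exact (hsub.eq_of_length ((List.mergeSort_perm l le).filter p).length_eq.symm).symm

theorem _root_.List.Pairwise.mergeSort_toLex [LinearOrder α] [LinearOrder β] (f : α → β)
    {l : List α} (hl : l.Pairwise (· < ·)) :
    (l.mergeSort (fun a b => f a ≤ f b)).Pairwise
      (fun a b => toLex (f a, a) < toLex (f b, b)) := by
  have trans : ∀ a b c, decide (f a ≤ f b) → decide (f b ≤ f c) → decide (f a ≤ f c) := by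
    simpa using fun _ _ _ => le_trans
  have total : ∀ a b, decide (f a ≤ f b) || decide (f b ≤ f a) := by
    simpa using fun a b => le_total (f a) (f b)
  rw [List.pairwise_iff_forall_sublist]
  intro a b hab
  have hle : f a ≤ f b := by
    simpa using List.pairwise_iff_forall_sublist.mp (List.pairwise_mergeSort trans total l) hab
  rw [Prod.Lex.toLex_lt_toLex]
  refine hle.lt_or_eq.imp id fun (heq : f a = f b) => ⟨heq, ?_⟩
  let p : α → Bool := fun x => f x = f a
  have hstable := List.filter_mergeSort_eq_filter p trans total <|
    (hl.filter p).imp_of_mem fun hx hy _ => by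
      simp only [List.mem_filter, p, decide_eq_true_eq] at hx hy
      simp [hx.2, hy.2]
  have hab' : [a, b].Sublist (l.filter p) := by
    have hkeep : [a, b].filter p = [a, b] := by simp [p, heq]
    simpa [hkeep, hstable] using hab.filter p
  simpa using List.pairwise_iff_forall_sublist.mp (hl.filter p) hab'

theorem _root_.List.idxOf_eq_countP_of_pairwise [DecidableEq α] [LinearOrder β] {f : α → β}
    {l : List α} (hl : l.Pairwise (fun a b => f a < f b)) {i : α} (hi : i ∈ l) :
    l.idxOf i = l.countP (fun j => f j < f i) := by
  induction l with
  | nil => simp at hi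
  | cons x t ih =>
    rw [List.pairwise_cons] at hl
    by_cases hx : x = i
    · subst hx
      have : t.countP (fun j => f j < f x) = 0 :=
        List.countP_eq_zero.mpr fun j hj => by simpa using (hl.1 j hj).le
      simp [this]
    · have hi' : i ∈ t := (List.mem_cons.mp hi).resolve_left (Ne.symm hx)
      rw [List.idxOf_cons_ne _ hx, ih hl.2 hi',
        List.countP_cons_of_pos (by simpa using hl.1 i hi')]

section Distance

variable {θ₁ θ₂ : Profile N} {rs : Finset N} {i j : N}

omit [Fintype N] [DecidableEq N] [LinearOrder N] in
theorem reachIn_mono (h : ∀ x, (θ₁ x).2 ⊆ (θ₂ x).2) {m : ℕ} (hj : reachIn θ₁ rs m j) :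
    reachIn θ₂ rs m j := by
  induction m generalizing j with
  | zero => exact hj
  | succ m ih =>
    obtain ⟨a, ha, hja⟩ := hj
    exact ⟨a, ih ha, h a hja⟩

omit [Fintype N] [DecidableEq N] [LinearOrder N] in
theorem exists_reachIn_of_reachIn (h : ∀ x ≠ i, (θ₂ x).2 ⊆ (θ₁ x).2) {m : ℕ}
    (hj : reachIn θ₂ rs m j) : ∃ m' ≤ m, reachIn θ₁ rs m' j ∨ reachIn θ₁ rs m' i := by
  induction m generalizing j with
  | zero => exact ⟨0, le_rfl, Or.inl hj⟩
  | succ m ih =>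
    obtain ⟨a, ha, hja⟩ := hj
    obtain ⟨m', hm', hr | hr⟩ := ih ha
    · by_cases hai : a = i
      · exact ⟨m', by omega, Or.inr (hai ▸ hr)⟩
      · exact ⟨m' + 1, by omega, Or.inl ⟨a, hr, h a hai hja⟩⟩
    · exact ⟨m', by omega, Or.inr hr⟩

omit [Fintype N] [DecidableEq N] [LinearOrder N] in
theorem dNet_le_of_reachIn {θ : Profile N} {m : ℕ} (h : reachIn θ rs m j) :
    dNet θ rs j ≤ m + 1 :=
  sInf_le ⟨m, h, rfl⟩

omit [Fintype N] [DecidableEq N] [LinearOrder N] in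
theorem dNet_anti (h : ∀ x, (θ₁ x).2 ⊆ (θ₂ x).2) (j : N) : dNet θ₂ rs j ≤ dNet θ₁ rs j :=
  sInf_le_sInf fun _ ⟨m, hm, hn⟩ => ⟨m, reachIn_mono h hm, hn⟩

omit [Fintype N] [DecidableEq N] [LinearOrder N] in
theorem min_dNet_le_dNet (h : ∀ x ≠ i, (θ₂ x).2 ⊆ (θ₁ x).2) (j : N) :
    min (dNet θ₁ rs j) (dNet θ₁ rs i) ≤ dNet θ₂ rs j := by
  refine le_sInf ?_
  rintro _ ⟨m, hm, rfl⟩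
  obtain ⟨m', hm', hr⟩ := exists_reachIn_of_reachIn h hm
  have hlen : (m' : ℕ∞) + 1 ≤ m + 1 := by gcongr
  rcases hr with hr | hr
  · exact (min_le_left _ _).trans ((dNet_le_of_reachIn hr).trans hlen)
  · exact (min_le_right _ _).trans ((dNet_le_of_reachIn hr).trans hlen)

end Distance

noncomputable def prioKey (θ : Profile N) (rs : Finset N) (j : N) : ℕ∞ ×ₗ N :=
  toLex (dNet θ rs j, j)

section Priority

variable {θ : Profile N} {rs : Finset N}

omit [DecidableEq N] in
@[simp]
theorem mem_prioList {j : N} : j ∈ prioList θ rs ↔ Connected θ rs j := by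
  simp [prioList, Nhat]

omit [DecidableEq N] in
theorem pairwise_prioList : (prioList θ rs).Pairwise (prioKey θ rs · < prioKey θ rs ·) :=
  (Finset.sortedLT_sort _).pairwise.mergeSort_toLex _

omit [DecidableEq N] in
theorem countP_prioList (p : N → Prop) [DecidablePred p] :
    (prioList θ rs).countP (fun j => p j) = #{j ∈ Nhat θ rs | p j} := by
  rw [prioList, (List.mergeSort_perm _ _).countP_eq, Finset.card_def, Finset.filter_val,
    ← Multiset.countP_eq_card_filter, ← Finset.sort_eq _ (· ≤ ·), Multiset.coe_countP]

theorem mem_take_prioList_iff {i : N} (hi : Connected θ rs i) (k : ℕ) :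
    i ∈ (prioList θ rs).take k ↔ #{j ∈ Nhat θ rs | prioKey θ rs j < prioKey θ rs i} < k := by
  rw [List.mem_take_iff_idxOf_lt (mem_prioList.mpr hi),
    List.idxOf_eq_countP_of_pairwise pairwise_prioList (mem_prioList.mpr hi), countP_prioList]

end Priority

def ExtendsAt (θ₁ θ₂ : Profile N) (i : N) : Prop :=
  (∀ x, (θ₁ x).2 ⊆ (θ₂ x).2) ∧ ∀ x ≠ i, (θ₂ x).2 ⊆ (θ₁ x).2

namespace ExtendsAt

variable {θ₁ θ₂ : Profile N} {rs : Finset N} {i : N}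

omit [Fintype N] [DecidableEq N] [LinearOrder N] in
theorem connected_iff (h : ExtendsAt θ₁ θ₂ i) : Connected θ₂ rs i ↔ Connected θ₁ rs i := by
  refine ⟨fun ⟨m, hm⟩ => ?_, fun ⟨m, hm⟩ => ⟨m, reachIn_mono h.1 hm⟩⟩
  obtain ⟨m', -, hr⟩ := exists_reachIn_of_reachIn h.2 hm
  exact ⟨m', hr.elim id id⟩

omit [DecidableEq N] [LinearOrder N] in
theorem nhat_subset (h : ExtendsAt θ₁ θ₂ i) : Nhat θ₁ rs ⊆ Nhat θ₂ rs := by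
  intro j
  simp only [Nhat, Finset.mem_filter, Finset.mem_univ, true_and]
  exact fun ⟨m, hm⟩ => ⟨m, reachIn_mono h.1 hm⟩

omit [Fintype N] [DecidableEq N] [LinearOrder N] in
theorem dNet_self (h : ExtendsAt θ₁ θ₂ i) : dNet θ₂ rs i = dNet θ₁ rs i :=
  le_antisymm (dNet_anti h.1 i) (by simpa using min_dNet_le_dNet (rs := rs) h.2 i)

omit [Fintype N] [DecidableEq N] in
theorem prioKey_lt (h : ExtendsAt θ₁ θ₂ i) {j : N} (hj : prioKey θ₁ rs j < prioKey θ₁ rs i) :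
    prioKey θ₂ rs j < prioKey θ₂ rs i := by
  simp only [prioKey, Prod.Lex.toLex_lt_toLex, h.dNet_self] at hj ⊢
  rcases hj with hlt | ⟨heq, hji⟩
  · exact Or.inl ((dNet_anti h.1 j).trans_lt hlt)
  · refine Or.inr ⟨le_antisymm ((dNet_anti h.1 j).trans heq.le) ?_, hji⟩
    simpa [heq] using min_dNet_le_dNet (rs := rs) h.2 j

theorem mem_take_prioList (h : ExtendsAt θ₁ θ₂ i) {k : ℕ}
    (hi : i ∈ (prioList θ₂ rs).take k) : i ∈ (prioList θ₁ rs).take k := by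
  have hc₂ : Connected θ₂ rs i := mem_prioList.mp (List.mem_of_mem_take hi)
  rw [mem_take_prioList_iff hc₂] at hi
  rw [mem_take_prioList_iff (h.connected_iff.mp hc₂)]
  refine lt_of_le_of_lt (Finset.card_le_card fun j hj => ?_) hi
  simp only [Finset.mem_filter] at hj ⊢
  exact ⟨h.nhat_subset hj.1, h.prioKey_lt hj.2⟩

end ExtendsAt

omit [Fintype N] [LinearOrder N] in
theorem extendsAt_update_hide (θ : Profile N) (i : N) (v v' : ℝ≥0) (r' : Finset N) :
    ExtendsAt (Function.update θ i (v, ∅)) (Function.update θ i (v', r')) i := by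
  refine ⟨fun x => ?_, fun x hx => by simp [hx]⟩
  rcases eq_or_ne x i with rfl | hx <;> simp [*]

theorem FCFS_hiding_dominant_general (k : ℕ) (θ : Profile N) (rs : Finset N) (i : N)
    (v : ℝ≥0) (v' : ℝ≥0) (r' : Finset N) :
    (v : ℝ) * ((FCFS k (Function.update θ i (v, ∅)) rs).1 i : ℝ) -
        ((FCFS k (Function.update θ i (v, ∅)) rs).2 i : ℝ) ≥
      (v : ℝ) * ((FCFS k (Function.update θ i (v', r')) rs).1 i : ℝ) -
        ((FCFS k (Function.update θ i (v', r')) rs).2 i : ℝ) := by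
  have hwin := (extendsAt_update_hide θ i v v' r').mem_take_prioList (rs := rs) (k := k)
  simp only [FCFS]
  split_ifs <;> simp_all

/-- **Proposition 5, FCFS-F part.** In the FCFS-F mechanism, for every
buyer `i` with true type `(v, r)`, reporting `(v, ∅)` (the true value while hiding all
followers) is a dominant strategy: for every profile of reports of the others and every
report `(v', r')` with `r' ⊆ r`, the utility from reporting `(v, ∅)` is at least the
utility from reporting `(v', r')`. -/
theorem FCFS_hiding_dominant (k : ℕ) (θ : Profile N) (rs : Finset N) (i : N)
    (v : ℝ≥0) (r : Finset N) (v' : ℝ≥0) (r' : Finset N) (hr : r' ⊆ r) :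
    (v : ℝ) * ((FCFS k (Function.update θ i (v, ∅)) rs).1 i : ℝ) -
        ((FCFS k (Function.update θ i (v, ∅)) rs).2 i : ℝ) ≥
      (v : ℝ) * ((FCFS k (Function.update θ i (v', r')) rs).1 i : ℝ) -
        ((FCFS k (Function.update θ i (v', r')) rs).2 i : ℝ) :=
  FCFS_hiding_dominant_general k θ rs i v v' r'

end SNA
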